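/- Let (A, B) be an exact 3-separation of a matroid M, with A-strands A₀, A₁ and B-strands B₀, B₁. Suppose M has an extension by p in which A₀ ∪ {p}, B₀ ∪ {p}, A₁ ∪ {p}, and B₁ ∪ {p} are all circuits. Then all four sets A₀ ∪ B₀, A₀ ∪ B₁, A₁ ∪ B₀, and A₁ ∪ B₁ are circuits of M. -/

import Mathlib

open Set

variable {α : Type*}

/-- The rank of a set in a matroid: the supremum of cardinalities of independent subsets. -/
noncomputable def mRk (M : Matroid α) (X : Set α) : ℕ :=
  sSup (Set.ncard '' {I | M.Indep I ∧ I ⊆ X})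

/-- Local connectivity `⊓(S, T) = r(S) + r(T) − r(S ∪ T)`. -/
noncomputable def mConn (M : Matroid α) (S T : Set α) : ℤ :=
  (mRk M S : ℤ) + (mRk M T : ℤ) - (mRk M (S ∪ T) : ℤ)

/-- A circuit: a minimal dependent set. -/
def mCircuit (M : Matroid α) (C : Set α) : Prop :=
  M.Dep C ∧ ∀ D, D ⊂ C → ¬ M.Dep D

/-- `M'` is a single-element extension of `M` by the element `p`:
`p` is a new element, the ground set grows by `p`, and deleting `p` recovers `M`. -/
def ExtBy (M' M : Matroid α) (p : α) : Prop :=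
  p ∉ M.E ∧ M'.E = insert p M.E ∧ M'.restrict M.E = M

/-- `M'` is an extension of `M` by the two new elements `x` and `y`. -/
def ExtBy2 (M' M : Matroid α) (x y : α) : Prop :=
  x ∉ M.E ∧ y ∉ M.E ∧ x ≠ y ∧ M'.E = insert x (insert y M.E) ∧ M'.restrict M.E = M

/-- `(A, B)` is an exact 3-separation of `M`: a partition of the ground set with
`r(A) + r(B) − r(M) = 2`. -/
def Exact3Sep (M : Matroid α) (A B : Set α) : Prop :=
  Disjoint A B ∧ A ∪ B = M.E ∧
    (mRk M A : ℤ) + (mRk M B : ℤ) - (mRk M M.E : ℤ) = 2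

/-- An `A`-strand relative to the separation `(A, B)`: a minimal subset `S` of `A` with
`⊓(S, B) = 1`. -/
def Strand (M : Matroid α) (A B S : Set α) : Prop :=
  S ⊆ A ∧ mConn M S B = 1 ∧ ∀ S', S' ⊂ S → mConn M S' B ≠ 1

/-! Let `S` be an `A`-strand and `T` a `B`-strand. Minimality makes `S` independent and finite,
and makes `S - s` skew to `B` for every `s ∈ S`, since deleting one element lowers `⊓(·, B)` by at
most one; so `(S - s) ∪ T` is independent, and symmetrically so is `S ∪ (T - t)`. Eliminating `p`
from the circuits `S ∪ p` and `T ∪ p` of the extension shows that `S ∪ T` is dependent, hence a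
circuit. -/

open Matroid

variable {M M' : Matroid α} {A B C S T X : Set α} {e p s : α}

lemma mRk_eq_toNat_eRk (M : Matroid α) (X : Set α) : mRk M X = (M.eRk X).toNat := by
  obtain ⟨I, hI⟩ := M.exists_isBasis' X
  have hle : ∀ J, M.Indep J → J ⊆ X → J.encard ≤ I.encard := fun J hJ hJX ↦
    hI.eRk_eq_encard ▸ hJ.encard_le_eRk_of_subset hJX
  rw [hI.eRk_eq_encard, mRk]
  rcases I.finite_or_infinite with hIfin | hIinf
  · refine IsGreatest.csSup_eq ⟨⟨I, ⟨hI.indep, hI.subset⟩, ncard_def I⟩, ?_⟩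
    rintro _ ⟨J, ⟨hJ, hJX⟩, rfl⟩
    exact ENat.toNat_le_toNat (hle J hJ hJX) hIfin.encard_lt_top.ne
  · -- the ranks of independent subsets are unbounded, and `sSup` of an unbounded set is `0`
    rw [hIinf.encard_eq, ENat.toNat_top, csSup_of_not_bddAbove, csSup_empty]
    · rfl
    rintro ⟨n, hn⟩
    obtain ⟨J, hJI, -, hJn⟩ := hIinf.exists_subset_ncard_eq (n + 1)
    have := hn ⟨J, ⟨hI.indep.subset hJI, hJI.trans hI.subset⟩, hJn⟩
    omega

lemma mConn_eq_toNat_eRk (M : Matroid α) (X Y : Set α) :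
    mConn M X Y = (M.eRk X).toNat + (M.eRk Y).toNat - (M.eRk (X ∪ Y)).toNat := by
  simp only [mConn, mRk_eq_toNat_eRk]

lemma mConn_empty_left (M : Matroid α) (B : Set α) : mConn M ∅ B = 0 := by
  simp [mConn_eq_toNat_eRk]

lemma mCircuit_iff_isCircuit : mCircuit M C ↔ M.IsCircuit C := by
  rw [mCircuit, isCircuit_iff_forall_ssubset]
  exact and_congr_right fun hC ↦
    forall₂_congr fun D hD ↦ not_dep_iff (hD.subset.trans hC.subset_ground)

lemma Matroid.IsCircuit.exists_isCircuit_subset_union_of_insert (hS : M.IsCircuit (insert p S))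
    (hT : M.IsCircuit (insert p T)) (hne : insert p S ≠ insert p T) :
    ∃ C ⊆ S ∪ T, M.IsCircuit C := by
  obtain ⟨C, hCsub, hC⟩ := hS.elimination hT hne p
  refine ⟨C, hCsub.trans ?_, hC⟩
  rintro x ⟨(hx | hx) | (hx | hx), hxp⟩ <;> simp_all

lemma ExtBy.dep_union (hext : ExtBy M' M p) (hSE : S ⊆ M.E) (hTE : T ⊆ M.E) (hsS : s ∈ S)
    (hsT : s ∉ T) (hS : M'.IsCircuit (insert p S)) (hT : M'.IsCircuit (insert p T)) :
    M.Dep (S ∪ T) := by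
  have hsp : s ≠ p := fun h ↦ hext.1 (h ▸ hSE hsS)
  obtain ⟨C, hCST, hC⟩ := hS.exists_isCircuit_subset_union_of_insert hT
    fun h ↦ by simpa [h, hsp, hsT] using mem_insert_of_mem p hsS
  have hSTE : S ∪ T ⊆ M.E := union_subset hSE hTE
  have hCM : M.IsCircuit C := hext.2.2 ▸ hC.isCircuit_restrict_of_subset (hCST.trans hSTE)
  exact hCM.dep.superset hCST hSTE

lemma Matroid.Indep.union_indep_of_eRk_union_eq_add (hX : M.Indep X) (hXfin : X.Finite)
    (hT : M.Indep T) (hTB : T ⊆ B) (hB : M.eRk B ≠ ⊤)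
    (h : M.eRk (X ∪ B) = M.eRk X + M.eRk B) : M.Indep (X ∪ T) := by
  have hTfin : T.Finite := hT.finite_of_subset_isRkFinite hTB (eRk_ne_top_iff.1 hB)
  have hsubmod := M.eRk_inter_add_eRk_union_le (X ∪ T) B
  rw [union_assoc, union_eq_self_of_subset_left hTB, h] at hsubmod
  have hle : X.encard + T.encard ≤ M.eRk (X ∪ T) := by
    rw [← hX.eRk_eq_encard, ← hT.eRk_eq_encard, ← ENat.add_le_add_iff_right hB]
    calc M.eRk X + M.eRk T + M.eRk B
        ≤ M.eRk ((X ∪ T) ∩ B) + (M.eRk X + M.eRk B) := by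
          rw [add_right_comm, add_comm]
          gcongr
          exact M.eRk_mono (subset_inter subset_union_right hTB)
      _ ≤ M.eRk (X ∪ T) + M.eRk B := hsubmod
  rw [indep_iff_eRk_eq_encard_of_finite (hXfin.union hTfin)]
  exact le_antisymm (M.eRk_le_encard _) ((encard_union_le X T).trans hle)

lemma mConn_sdiff_singleton_of_mem_closure (heS : e ∈ S) (he : e ∈ M.closure (S \ {e})) :
    mConn M (S \ {e}) B = mConn M S B := by
  have hins : ∀ Y, S \ {e} ⊆ Y → M.eRk (insert e Y) = M.eRk Y := fun Y hY ↦ by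
    rw [← eRk_closure_eq, closure_insert_eq_of_mem_closure (M.closure_subset_closure hY he),
      eRk_closure_eq]
  have hS : insert e (S \ {e}) = S := insert_sdiff_singleton.trans (insert_eq_of_mem heS)
  rw [mConn_eq_toNat_eRk, mConn_eq_toNat_eRk, ← hins _ subset_rfl,
    ← hins (S \ {e} ∪ B) subset_union_left, ← insert_union, hS]

lemma Strand.nonempty (hS : Strand M A B S) : S.Nonempty :=
  nonempty_iff_ne_empty.2 fun h ↦ by simpa [h, mConn_empty_left] using hS.2.1

lemma Strand.indep (hS : Strand M A B S) (hA : A ⊆ M.E) : M.Indep S := by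
  rw [indep_iff_forall_notMem_closure_sdiff (hS.1.trans hA)]
  exact fun e heS he ↦ hS.2.2 _ (sdiff_singleton_ssubset.2 heS)
    ((mConn_sdiff_singleton_of_mem_closure heS he).trans hS.2.1)

lemma Strand.eRk_ne_top (hS : Strand M A B S) : M.eRk S ≠ ⊤ := by
  intro htop
  obtain ⟨s, hs⟩ := hS.nonempty
  have htop' : M.eRk (S \ {s}) = ⊤ := by
    have := M.eRk_insert_le_add_one s (S \ {s})
    rw [insert_sdiff_singleton, insert_eq_of_mem hs, htop, top_le_iff] at this
    simpa using this
  have hunion : ∀ X, M.eRk X = ⊤ → M.eRk (X ∪ B) = ⊤ := fun X h ↦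
    top_le_iff.1 (h ▸ M.eRk_mono subset_union_left)
  -- with both ranks infinite, `mConn` truncates to `r(B)` on `S` and on `S - s` alike
  refine hS.2.2 _ (sdiff_singleton_ssubset.2 hs) ?_
  rw [← hS.2.1, mConn_eq_toNat_eRk, mConn_eq_toNat_eRk, htop, htop', hunion _ htop,
    hunion _ htop']

lemma Strand.finite (hS : Strand M A B S) (hSi : M.Indep S) : S.Finite :=
  encard_ne_top_iff.1 (hSi.eRk_eq_encard ▸ hS.eRk_ne_top)

lemma Strand.eq_singleton_of_eRk_eq_top (hS : Strand M A B S) (hSi : M.Indep S) (hs : s ∈ S)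
    (hB : M.eRk B = ⊤) : S = {s} := by
  have hSB : M.eRk (S ∪ B) = ⊤ := top_le_iff.1 (hB ▸ M.eRk_mono subset_union_right)
  have hconn := hS.2.1
  -- the infinite ranks truncate to `0`, leaving `mConn M S B = |S|`
  rw [mConn_eq_toNat_eRk, hB, hSB, hSi.eRk_eq_encard, ← ncard_def] at hconn
  obtain ⟨t, rfl⟩ := ncard_eq_one.1 (by simpa using hconn)
  rw [mem_singleton_iff.1 hs]

lemma Strand.eRk_sdiff_singleton_union (hS : Strand M A B S) (hSi : M.Indep S) (hs : s ∈ S)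
    (hB : M.eRk B ≠ ⊤) : M.eRk (S \ {s} ∪ B) = M.eRk (S \ {s}) + M.eRk B := by
  have hrk : M.eRk S = M.eRk (S \ {s}) + 1 := by
    rw [hSi.eRk_eq_encard, (hSi.subset sdiff_subset).eRk_eq_encard,
      encard_sdiff_singleton_add_one hs]
  have hup : M.eRk (S ∪ B) ≤ M.eRk (S \ {s} ∪ B) + 1 := by
    have := M.eRk_insert_le_add_one s (S \ {s} ∪ B)
    rwa [← insert_union, insert_sdiff_singleton, insert_eq_of_mem hs] at this
  have hmono : M.eRk (S \ {s} ∪ B) ≤ M.eRk (S ∪ B) :=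
    M.eRk_mono (union_subset_union_left B sdiff_subset)
  have hsub : M.eRk (S ∪ B) ≤ M.eRk S + M.eRk B := M.eRk_union_le_eRk_add_eRk S B
  have hconn := hS.2.1
  have hmin := hS.2.2 _ (sdiff_singleton_ssubset.2 hs)
  rw [mConn_eq_toNat_eRk] at hconn hmin
  have hS' : M.eRk (S \ {s}) ≠ ⊤ := fun h ↦ hS.eRk_ne_top (by rw [hrk, h, top_add])
  have hSB : M.eRk (S ∪ B) ≠ ⊤ := ne_top_of_le_ne_top (by simp [hS.eRk_ne_top, hB]) hsub
  lift M.eRk S to ℕ using hS.eRk_ne_top with k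
  lift M.eRk (S \ {s}) to ℕ using hS' with a
  lift M.eRk B to ℕ using hB with b
  lift M.eRk (S ∪ B) to ℕ using hSB with w
  lift M.eRk (S \ {s} ∪ B) to ℕ using ne_top_of_le_ne_top (ENat.natCast_ne_top w) hmono with c
  norm_cast at hrk hup hmono hsub ⊢
  simp only [ENat.toNat_natCast] at hconn hmin
  omega

lemma Strand.indep_sdiff_singleton_union (hS : Strand M A B S) (hSi : M.Indep S) (hs : s ∈ S)
    (hT : M.Indep T) (hTB : T ⊆ B) : M.Indep (S \ {s} ∪ T) := by
  by_cases hB : M.eRk B = ⊤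
  · rwa [hS.eq_singleton_of_eRk_eq_top hSi hs hB, sdiff_self, empty_union]
  · exact (hSi.subset sdiff_subset).union_indep_of_eRk_union_eq_add (hS.finite hSi).sdiff hT hTB
      hB (hS.eRk_sdiff_singleton_union hSi hs hB)

lemma Strand.union_isCircuit (hext : ExtBy M' M p) (hAE : A ⊆ M.E) (hBE : B ⊆ M.E)
    (hAB : Disjoint A B) (hS : Strand M A B S) (hT : Strand M B A T)
    (hSp : M'.IsCircuit (insert p S)) (hTp : M'.IsCircuit (insert p T)) :
    M.IsCircuit (S ∪ T) := by
  have hST : Disjoint S T := hAB.mono hS.1 hT.1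
  obtain ⟨s, hs⟩ := hS.nonempty
  refine isCircuit_iff_dep_forall_sdiff_singleton_indep.2 ⟨?_, ?_⟩
  · exact hext.dep_union (hS.1.trans hAE) (hT.1.trans hBE) hs (hST.notMem_of_mem_left hs) hSp hTp
  rintro e (he | he)
  · rw [union_sdiff_distrib, sdiff_singleton_eq_self (hST.notMem_of_mem_left he)]
    exact hS.indep_sdiff_singleton_union (hS.indep hAE) he (hT.indep hBE) hT.1
  · rw [union_sdiff_distrib, sdiff_singleton_eq_self (hST.notMem_of_mem_right he), union_comm]
    exact hT.indep_sdiff_singleton_union (hT.indep hBE) he (hS.indep hAE) hS.1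

/-- If `M` extends by `p` so that `A₀ ∪ {p}`, `B₀ ∪ {p}`, `A₁ ∪ {p}` and `B₁ ∪ {p}` are all
circuits, then all four strand unions are circuits of `M`. -/
theorem four_circuits (M : Matroid α) (A B A₀ A₁ B₀ B₁ : Set α)
    (hsep : Exact3Sep M A B)
    (hA₀ : Strand M A B A₀) (hA₁ : Strand M A B A₁)
    (hB₀ : Strand M B A B₀) (hB₁ : Strand M B A B₁)
    (hext : ∃ (M' : Matroid α) (p : α), ExtBy M' M p ∧
      mCircuit M' (insert p A₀) ∧ mCircuit M' (insert p B₀) ∧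
      mCircuit M' (insert p A₁) ∧ mCircuit M' (insert p B₁)) :
    mCircuit M (A₀ ∪ B₀) ∧ mCircuit M (A₀ ∪ B₁) ∧
      mCircuit M (A₁ ∪ B₀) ∧ mCircuit M (A₁ ∪ B₁) := by
  obtain ⟨hAB, hground, -⟩ := hsep
  obtain ⟨M', p, hext, hA₀p, hB₀p, hA₁p, hB₁p⟩ := hext
  simp only [mCircuit_iff_isCircuit] at hA₀p hB₀p hA₁p hB₁p ⊢
  have hAE : A ⊆ M.E := hground ▸ subset_union_left
  have hBE : B ⊆ M.E := hground ▸ subset_union_right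
  have hcirc {S T : Set α} (hS : Strand M A B S) (hT : Strand M B A T) :=
    hS.union_isCircuit hext hAE hBE hAB hT
  exact ⟨hcirc hA₀ hB₀ hA₀p hB₀p, hcirc hA₀ hB₁ hA₀p hB₁p, hcirc hA₁ hB₀ hA₁p hB₀p,
    hcirc hA₁ hB₁ hA₁p hB₁p⟩
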